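/- Let n ≥ 2 and let f : 𝔽₂ⁿ → 𝔽₂ be a nested canalizing function written in layered form with layer sizes k₁,…,k_r. Then the average sensitivity of f equals s^f = Σ_{l=1}^{r} k_l · A_l^f = (1/2^{n−1}) · Σ_{l=1}^{r} k_l · Σ_{j=1}^{r−l+1} (−1)^{j−1} · 2^{n − (k₁+⋯+k_{j+l−1})}, where A_l^f is the common activity of the variables in the l-th layer. -/

import Mathlib

/-- `f` is nested canalizing in the variable order `σ(0), σ(1), …, σ(n-1)`
with canalizing input values `a` and canalized output values `b`:
`f x = b k` whenever `x (σ j) = a j + 1` for all `j < k` and `x (σ k) = a k`,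
and `f x = b (last) + 1` whenever `x (σ j) = a j + 1` for all `j`. -/
def IsNCF {n : ℕ} (f : (Fin n → ZMod 2) → ZMod 2) (σ : Equiv.Perm (Fin n))
    (a b : Fin n → ZMod 2) : Prop :=
  (∀ (k : Fin n) (x : Fin n → ZMod 2),
      (∀ j : Fin n, j < k → x (σ j) = a j + 1) → x (σ k) = a k → f x = b k) ∧
  (∀ k : Fin n, (∀ j : Fin n, j ≤ k) →
      ∀ x : Fin n → ZMod 2, (∀ j : Fin n, x (σ j) = a j + 1) → f x = b k + 1)

/-- The nested expression `M i * (M (i+1) * ( … * (M (i+t-1) + 1) … ) + 1)`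
with `t` factors, i.e. `nestVal M t i = Mᵢ(M_{i+1}(⋯(M_{i+t-1} ⊕ 1)⋯) ⊕ 1)`. -/
def nestVal (M : ℕ → ZMod 2) : ℕ → ℕ → ZMod 2
  | 0, _ => 0
  | 1, i => M i
  | (t + 2), i => M i * (nestVal M (t + 1) (i + 1) + 1)

/-- The extended monomial of the `i`-th layer, given the layer assignment `L`
and the complemented inputs `a`:  `Mᵢ(x) = ∏_{L j = i} (x j ⊕ a j)`. -/
def layerMon {n r : ℕ} (L : Fin n → Fin r) (a : Fin n → ZMod 2) (i : ℕ)
    (x : Fin n → ZMod 2) : ZMod 2 :=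
  ∏ j ∈ Finset.univ.filter (fun j : Fin n => (L j : ℕ) = i), (x j + a j)

/-- `kᵢ`, the number of variables in the `i`-th layer. -/
def layerSize {n r : ℕ} (L : Fin n → Fin r) (i : ℕ) : ℕ :=
  (Finset.univ.filter (fun j : Fin n => (L j : ℕ) = i)).card

/-- `K_l = k₀ + k₁ + ⋯ + k_{l-1}`, the number of variables in the first `l` layers. -/
def layerSum {n r : ℕ} (L : Fin n → Fin r) (l : ℕ) : ℕ :=
  ∑ i ∈ Finset.range l, layerSize L i

/-- `f` is given in the layered form
`f = M₁(M₂(⋯(M_{r−1}(M_r ⊕ 1) ⊕ 1)⋯) ⊕ 1) ⊕ b`, where the `Mᵢ` are extended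
monomials in pairwise disjoint sets of variables comprising all `n` variables
(the variable set of `Mᵢ` being the `i`-th layer `{j | L j = i}`), every layer
is nonempty, and the last layer has at least two variables. -/
def IsLayeredForm {n r : ℕ} (f : (Fin n → ZMod 2) → ZMod 2)
    (L : Fin n → Fin r) (a : Fin n → ZMod 2) (b : ZMod 2) : Prop :=
  1 ≤ r ∧
  (∀ i : Fin r, 1 ≤ layerSize L (i : ℕ)) ∧
  2 ≤ layerSize L (r - 1) ∧
  ∀ x : Fin n → ZMod 2, f x = nestVal (fun i => layerMon L a i x) r 0 + b

/-- The activity `λᵢᶠ = 2⁻ⁿ ∑_x (f(x with xᵢ flipped) ⊕ f(x))`, the Boolean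
difference being regarded as the integer 0 or 1. -/
def activity {n : ℕ} (f : (Fin n → ZMod 2) → ZMod 2) (i : Fin n) : ℚ :=
  (1 / 2 ^ n) * ∑ x : Fin n → ZMod 2,
    ((f (Function.update x i (x i + 1)) + f x).val : ℚ)

/-- The average sensitivity `sᶠ = ∑ᵢ λᵢᶠ`. -/
def avgSens {n : ℕ} (f : (Fin n → ZMod 2) → ZMod 2) : ℚ :=
  ∑ i : Fin n, activity f i

/-!
Write `N_l = M_l(M_{l+1}(⋯) ⊕ 1)` for the tail of the layered form from layer `l` on, and
`K_l = k₀ + ⋯ + k_{l-1}`. Flipping a variable of layer `m` changes `f` exactly when every other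
variable of the layers `0, …, m` makes its factor `1` and `N_{m+1} = 0`; these conditions
concern disjoint sets of variables, so the activity is `2^{1-K_{m+1}} (1 - d_{m+1})`, where
`d_l` is the density of `N_l`. From `N_l = M_l (N_{l+1} ⊕ 1)` we get
`d_l = 2^{-k_l} (1 - d_{l+1})` with `d_r = 0`, which unrolls to
`2^{-K_l} (1 - d_l) = Σ_i (-1)^i 2^{-K_{l+i}}`. Summing the activities layer by layer gives
the formula.
-/

open Finset

lemma val_mul_zmod_two (u v : ZMod 2) : ((u * v).val : ℚ) = u.val * v.val := by
  have h : (u * v).val = u.val * v.val := by revert u v; decide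
  exact_mod_cast h

lemma val_add_one_zmod_two (v : ZMod 2) : ((v + 1).val : ℚ) = 1 - v.val := by
  have h : (v + 1).val + v.val = 1 := by revert v; decide
  have h' : ((v + 1).val : ℚ) + v.val = 1 := by exact_mod_cast h
  linarith

lemma update_add_one_eq_add_single {ι : Type*} [DecidableEq ι] (x : ι → ZMod 2) (j : ι) :
    Function.update x j (x j + 1) = x + Pi.single j 1 := by
  ext i
  rcases eq_or_ne i j with rfl | hij <;> simp [*]

section BoolDensity

variable {ι : Type*} [Fintype ι] [DecidableEq ι]

def boolDensity (g : (ι → ZMod 2) → ZMod 2) : ℚ :=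
  1 / 2 ^ Fintype.card ι * ∑ x, ((g x).val : ℚ)

lemma boolDensity_zero : boolDensity (fun _ : ι → ZMod 2 => 0) = 0 := by
  simp [boolDensity]

lemma boolDensity_add_one (g : (ι → ZMod 2) → ZMod 2) :
    boolDensity (fun x => g x + 1) = 1 - boolDensity g := by
  simp only [boolDensity, val_add_one_zmod_two, sum_sub_distrib, sum_const, card_univ,
    Fintype.card_fun, ZMod.card, nsmul_eq_mul, mul_one]
  push_cast
  field_simp

/-- Flipping `x j` swaps the points where `x j + c` is `0` with those where it is `1`
and does not change `w`, so both halves carry the same mass. -/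
lemma sum_val_add_mul_eq_half_sum (j : ι) (c : ZMod 2) (w : (ι → ZMod 2) → ℚ)
    (hw : ∀ x v, w (Function.update x j v) = w x) :
    ∑ x, ((x j + c).val : ℚ) * w x = 1 / 2 * ∑ x, w x := by
  have hflip : ∑ x, ((x j + c).val : ℚ) * w x = ∑ x, ((x j + 1 + c).val : ℚ) * w x := by
    refine (Equiv.sum_comp (Equiv.addRight (Pi.single j 1)) _).symm.trans
      (sum_congr rfl fun x _ => ?_)
    simp [← update_add_one_eq_add_single, hw]
  have hcompl : ∑ x, ((x j + 1 + c).val : ℚ) * w x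
      = ∑ x, w x - ∑ x, ((x j + c).val : ℚ) * w x := by
    rw [← sum_sub_distrib]
    refine sum_congr rfl fun x _ => ?_
    rw [add_right_comm, val_add_one_zmod_two]
    ring
  linarith

lemma sum_val_prod_mul_eq (a : ι → ZMod 2) (S : Finset ι) (w : (ι → ZMod 2) → ℚ)
    (hw : ∀ i ∈ S, ∀ x v, w (Function.update x i v) = w x) :
    ∑ x, ((∏ i ∈ S, (x i + a i)).val : ℚ) * w x = (1 / 2) ^ #S * ∑ x, w x := by
  induction S using Finset.induction_on with
  | empty => simp [show (1 : ZMod 2).val = 1 from rfl]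
  | @insert j S hj ih =>
    have hwS : ∀ x v, ((∏ i ∈ S, (Function.update x j v i + a i)).val : ℚ)
        * w (Function.update x j v) = ((∏ i ∈ S, (x i + a i)).val : ℚ) * w x := by
      intro x v
      rw [hw j (mem_insert_self j S)]
      congr 3
      exact prod_congr rfl fun i hi => by
        rw [Function.update_of_ne (ne_of_mem_of_not_mem hi hj)]
    simp only [prod_insert hj, val_mul_zmod_two, mul_assoc]
    rw [sum_val_add_mul_eq_half_sum j (a j) _ hwS,
      ih fun i hi => hw i (mem_insert_of_mem hi), card_insert_of_notMem hj, pow_succ]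
    ring

lemma boolDensity_prod_mul (a : ι → ZMod 2) (S : Finset ι) (g : (ι → ZMod 2) → ZMod 2)
    (hg : ∀ i ∈ S, ∀ x v, g (Function.update x i v) = g x) :
    boolDensity (fun x => (∏ i ∈ S, (x i + a i)) * g x) = (1 / 2) ^ #S * boolDensity g := by
  simp only [boolDensity, val_mul_zmod_two]
  rw [sum_val_prod_mul_eq a S _ fun i hi x v => by rw [hg i hi]]
  ring

end BoolDensity

lemma nestVal_succ (M : ℕ → ZMod 2) (t i : ℕ) :
    nestVal M (t + 1) i = M i * (nestVal M t (i + 1) + 1) := by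
  cases t <;> simp [nestVal]

lemma nestVal_congr {M M' : ℕ → ZMod 2} (t : ℕ) {s : ℕ}
    (h : ∀ i, s ≤ i → M i = M' i) :
    nestVal M t s = nestVal M' t s := by
  induction t generalizing s with
  | zero => rfl
  | succ t ih =>
    rw [nestVal_succ, nestVal_succ, h s le_rfl, ih fun i hi => h i (by omega)]

section Layers

variable {n r : ℕ} (L : Fin n → Fin r) (a : Fin n → ZMod 2)

lemma card_filter_lt_eq_layerSum (l : ℕ) : #{t | (L t : ℕ) < l} = layerSum L l := by
  rw [card_eq_sum_card_fiberwise (f := fun t => (L t : ℕ)) (t := range l)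
    fun t ht => by simpa using ht]
  refine sum_congr rfl fun i hi => ?_
  rw [filter_filter, layerSize]
  congr 1
  exact filter_congr fun t _ => by simp at hi; omega

lemma layerSum_succ (l : ℕ) : layerSum L (l + 1) = layerSum L l + layerSize L l :=
  sum_range_succ _ _

lemma layerSum_le (l : ℕ) : layerSum L l ≤ n := by
  simpa [← card_filter_lt_eq_layerSum] using card_le_univ (α := Fin n) _

lemma sum_comp_eq_sum_layerSize_mul (G : ℕ → ℚ) :
    ∑ j, G (L j) = ∑ l ∈ range r, (layerSize L l : ℚ) * G l := by
  rw [← sum_fiberwise_of_maps_to (g := fun j => (L j : ℕ)) (t := range r)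
    fun j _ => mem_range.2 (L j).isLt]
  refine sum_congr rfl fun l _ => ?_
  rw [sum_congr rfl fun j hj => by rw [(mem_filter.1 hj).2], sum_const, nsmul_eq_mul]
  rfl

/-- The tail `M_l(M_{l+1}(⋯(M_{r-1} ⊕ 1)⋯) ⊕ 1)` of the layered form. -/
def layerTail (l : ℕ) (x : Fin n → ZMod 2) : ZMod 2 :=
  nestVal (fun i => layerMon L a i x) (r - l) l

variable {L a}

lemma layerMon_update {x : Fin n → ZMod 2} {j : Fin n} {i : ℕ} (v : ZMod 2)
    (h : (L j : ℕ) ≠ i) :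
    layerMon L a i (Function.update x j v) = layerMon L a i x :=
  prod_congr rfl fun t ht => by
    rw [Function.update_of_ne]
    rintro rfl
    exact h (mem_filter.1 ht).2

lemma layerMon_update_add_one_add (x : Fin n → ZMod 2) (j : Fin n) :
    layerMon L a (L j) (Function.update x j (x j + 1)) + layerMon L a (L j) x
      = ∏ t ∈ ({t | (L t : ℕ) = L j} : Finset (Fin n)).erase j, (x t + a t) := by
  have hj : j ∈ ({t | (L t : ℕ) = L j} : Finset (Fin n)) := by simp
  rw [layerMon, layerMon, ← mul_prod_erase _ _ hj, ← mul_prod_erase _ _ hj,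
    Function.update_self, prod_congr rfl fun t ht => by
      rw [Function.update_of_ne (ne_of_mem_erase ht)]]
  have hflip : ∀ v c : ZMod 2, v + 1 + c + (v + c) = 1 := by decide
  linear_combination (∏ t ∈ ({t | (L t : ℕ) = L j} : Finset (Fin n)).erase j, (x t + a t))
    * hflip (x j) (a j)

lemma layerTail_self (x : Fin n → ZMod 2) : layerTail L a r x = 0 := by
  simp [layerTail, nestVal]

lemma layerTail_of_lt {l : ℕ} (hl : l < r) (x : Fin n → ZMod 2) :
    layerTail L a l x = layerMon L a l x * (layerTail L a (l + 1) x + 1) := by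
  rw [layerTail, show r - l = r - (l + 1) + 1 by omega, nestVal_succ]
  rfl

lemma layerTail_update {l : ℕ} {x : Fin n → ZMod 2} {j : Fin n} (v : ZMod 2)
    (h : (L j : ℕ) < l) :
    layerTail L a l (Function.update x j v) = layerTail L a l x :=
  nestVal_congr _ fun _ hi => layerMon_update v (by omega)

lemma layerTail_update_add_one_add (x : Fin n → ZMod 2) (j : Fin n) {s : ℕ} (hs : s ≤ L j) :
    layerTail L a s (Function.update x j (x j + 1)) + layerTail L a s x
      = (∏ t ∈ ({t | s ≤ (L t : ℕ) ∧ (L t : ℕ) ≤ L j} : Finset (Fin n)).erase j,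
          (x t + a t))
        * (layerTail L a (L j + 1) x + 1) := by
  induction hs using Nat.decreasingInduction with
  | self =>
    rw [layerTail_of_lt (L j).isLt, layerTail_of_lt (L j).isLt,
      layerTail_update _ (Nat.lt_succ_self _), ← add_mul, layerMon_update_add_one_add]
    congr 3
    ext t
    simp only [mem_filter, mem_univ, true_and]
    omega
  | of_succ k hk ih =>
    have hkr : k < r := hk.trans (L j).isLt
    have hchar : ∀ m p q : ZMod 2, m * (p + 1) + m * (q + 1) = m * (p + q) := by decide
    have hdisj : Disjoint ({t | (L t : ℕ) = k} : Finset (Fin n))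
        (({t | k + 1 ≤ (L t : ℕ) ∧ (L t : ℕ) ≤ L j} : Finset (Fin n)).erase j) := by
      rw [disjoint_left]
      intro t ht ht'
      simp only [mem_filter, mem_univ, true_and, mem_erase] at ht ht'
      omega
    rw [layerTail_of_lt hkr, layerTail_of_lt hkr, layerMon_update _ hk.ne', hchar, ih,
      ← mul_assoc, layerMon, ← prod_union hdisj]
    congr 3
    ext t
    simp only [mem_filter, mem_univ, true_and, mem_erase, mem_union]
    rcases eq_or_ne t j with rfl | htj
    · simp only [ne_eq, not_true_eq_false, false_and, or_false, iff_false]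
      omega
    · simp only [ne_eq, htj, not_false_eq_true, true_and]
      omega

end Layers

section Density

variable {n r : ℕ} {L : Fin n → Fin r} {a : Fin n → ZMod 2}

lemma boolDensity_layerTail_of_lt {l : ℕ} (hl : l < r) :
    boolDensity (layerTail L a l)
      = (1 / 2) ^ layerSize L l * (1 - boolDensity (layerTail L a (l + 1))) := by
  have hsplit : layerTail L a l = fun x =>
      (∏ t ∈ ({t | (L t : ℕ) = l} : Finset (Fin n)), (x t + a t))
        * (layerTail L a (l + 1) x + 1) :=
    funext (layerTail_of_lt hl)
  rw [hsplit, boolDensity_prod_mul _ _ _ fun t ht x v => by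
      rw [layerTail_update _ (by simp only [mem_filter, mem_univ, true_and] at ht; omega)],
    boolDensity_add_one]
  rfl

lemma half_pow_layerSum_mul_one_sub_boolDensity {l : ℕ} (hl : l ≤ r) :
    (1 / 2) ^ layerSum L l * (1 - boolDensity (layerTail L a l))
      = ∑ i ∈ range (r - l + 1), (-1) ^ i * (1 / 2 : ℚ) ^ layerSum L (l + i) := by
  induction hl using Nat.decreasingInduction with
  | self =>
    simp [funext layerTail_self, boolDensity_zero]
  | of_succ k hk ih =>
    have hshift : ∑ i ∈ range (r - (k + 1) + 1),
          (-1) ^ (i + 1) * (1 / 2 : ℚ) ^ layerSum L (k + (i + 1))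
        = -((1 / 2) ^ layerSum L (k + 1) * (1 - boolDensity (layerTail L a (k + 1)))) := by
      rw [ih, ← sum_neg_distrib]
      refine sum_congr rfl fun i _ => ?_
      rw [show k + (i + 1) = k + 1 + i by omega]
      ring
    rw [show r - k + 1 = r - (k + 1) + 1 + 1 by omega, sum_range_succ', hshift,
      boolDensity_layerTail_of_lt hk, layerSum_succ, add_zero]
    ring

end Density

lemma one_div_two_pow_pred_mul_two_pow_sub {n K : ℕ} (hn : 1 ≤ n) (hK : K ≤ n) :
    1 / 2 ^ (n - 1) * (2 : ℚ) ^ (n - K) = 2 * (1 / 2) ^ K := by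
  rw [pow_sub₀ _ two_ne_zero hK, pow_sub₀ _ two_ne_zero hn, one_div_pow]
  field_simp

lemma activity_eq_of_forall_eq_nestVal {n r : ℕ} {f : (Fin n → ZMod 2) → ZMod 2}
    {L : Fin n → Fin r} {a : Fin n → ZMod 2} {b : ZMod 2}
    (hf : ∀ x, f x = nestVal (fun i => layerMon L a i x) r 0 + b) (j : Fin n) :
    activity f j = 1 / 2 ^ (n - 1) *
      ∑ i ∈ range (r - L j), (-1 : ℚ) ^ i * 2 ^ (n - layerSum L (i + L j + 1)) := by
  set A := ({t | 0 ≤ (L t : ℕ) ∧ (L t : ℕ) ≤ L j} : Finset (Fin n)).erase j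
  have hderiv : (fun x => f (Function.update x j (x j + 1)) + f x)
      = fun x => (∏ t ∈ A, (x t + a t)) * (layerTail L a (L j + 1) x + 1) := by
    have hb : ∀ p q c : ZMod 2, p + c + (q + c) = p + q := by decide
    exact funext fun x => by
      rw [hf, hf, hb]
      exact layerTail_update_add_one_add x j (Nat.zero_le _)
  have hcard : #A + 1 = layerSum L (L j + 1) := by
    rw [card_erase_add_one (by simp), ← card_filter_lt_eq_layerSum]
    congr 1
    exact filter_congr fun t _ => by omega
  have hactivity :
      activity f j = boolDensity fun x => f (Function.update x j (x j + 1)) + f x := by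
    simp only [activity, boolDensity, Fintype.card_fin]
  rw [hactivity, hderiv, boolDensity_prod_mul _ _ _ fun t ht x v => by
      rw [layerTail_update _ (by simp only [A, mem_erase, mem_filter] at ht; omega)],
    boolDensity_add_one, mul_sum]
  have hlt : (L j : ℕ) < r := (L j).isLt
  calc (1 / 2) ^ #A * (1 - boolDensity (layerTail L a (L j + 1)))
      = 2 * ((1 / 2) ^ layerSum L (L j + 1) * (1 - boolDensity (layerTail L a (L j + 1)))) := by
        rw [← hcard, pow_succ]
        ring
    _ = 2 * ∑ i ∈ range (r - (L j + 1) + 1),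
          (-1) ^ i * (1 / 2 : ℚ) ^ layerSum L (L j + 1 + i) := by
        rw [half_pow_layerSum_mul_one_sub_boolDensity (by omega)]
    _ = _ := by
        rw [show r - (L j + 1) + 1 = r - L j by omega, mul_sum]
        refine sum_congr rfl fun i _ => ?_
        rw [mul_left_comm (1 / 2 ^ (n - 1) : ℚ),
          one_div_two_pow_pred_mul_two_pow_sub j.pos (layerSum_le L _),
          show i + L j + 1 = L j + 1 + i by omega]
        ring

theorem statement14_general {n r : ℕ} (f : (Fin n → ZMod 2) → ZMod 2)
    (L : Fin n → Fin r) (a : Fin n → ZMod 2) (b : ZMod 2)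
    (h : IsLayeredForm f L a b) :
    avgSens f = (1 / 2 ^ (n - 1)) *
      ∑ l ∈ Finset.range r, (layerSize L l : ℚ) *
        ∑ j ∈ Finset.range (r - l),
          (-1 : ℚ) ^ j * 2 ^ (n - layerSum L (j + l + 1)) := by
  obtain ⟨-, -, -, hf⟩ := h
  rw [avgSens, sum_congr rfl fun j _ => activity_eq_of_forall_eq_nestVal hf j,
    sum_comp_eq_sum_layerSize_mul L fun l =>
      1 / 2 ^ (n - 1) * ∑ i ∈ range (r - l), (-1 : ℚ) ^ i * 2 ^ (n - layerSum L (i + l + 1)),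
    mul_sum]
  exact sum_congr rfl fun l _ => mul_left_comm _ _ _

/-- The average sensitivity of a nested canalizing function in layered form
with layer sizes `k₁,…,k_r` is
`sᶠ = Σ_{l=1}^{r} k_l·A_l = 2^{-(n−1)} Σ_{l=1}^{r} k_l Σ_{j=1}^{r−l+1}
(−1)^{j−1} 2^{n−(k₁+⋯+k_{j+l−1})}` (layers indexed from 0 here). -/
theorem statement14 {n r : ℕ} (hn : 2 ≤ n) (f : (Fin n → ZMod 2) → ZMod 2)
    (L : Fin n → Fin r) (a : Fin n → ZMod 2) (b : ZMod 2)
    (h : IsLayeredForm f L a b) :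
    avgSens f = (1 / 2 ^ (n - 1)) *
      ∑ l ∈ Finset.range r, (layerSize L l : ℚ) *
        ∑ j ∈ Finset.range (r - l),
          (-1 : ℚ) ^ j * 2 ^ (n - layerSum L (j + l + 1)) :=
  statement14_general f L a b h
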